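/- Let n be a positive integer and t ∈ {0,…,n-1}. Define q : ℤ_n × ℤ_n → ℚ/ℤ (with the group structure of the previous central extension D with d ≡ 2t mod n) by q(i,j) = ij/n + i²t/n² mod ℤ for representatives i,j ∈ {0,…,n-1}. Then q is a quadratic form on D: q((i,j)^m) = m²·q(i,j) for all m ∈ ℤ, and b((i,k),(j,ℓ)) = q((i,k)(j,ℓ)) - q(i,k) - q(j,ℓ) is symmetric and bilinear, given by b((i,k),(j,ℓ)) = (iℓ + jk)/n + 2ijt/n² mod ℤ. -/
import Mathlib


noncomputable section

/-- `q(i,j) = ij/n + i²t/n² mod ℤ` is a quadratic form on the twisted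
abelian group `D` of STATEMENT 17: it satisfies `q(xᵐ) = m²·q(x)` and its polarization
`b((i,k),(j,ℓ)) = (iℓ + jk)/n + 2ijt/n² mod ℤ` is symmetric and biadditive. -/
theorem orbifold_conformal_weight_quadratic_form
    (n : ℕ) (hn : 0 < n) (t : ℕ) (ht : t < n)
    (d : ℕ) (hd : d < n) (hdt : (d : ZMod n) = 2 * (t : ZMod n)) :
    let mul : ZMod n × ZMod n → ZMod n × ZMod n → ZMod n × ZMod n :=
      fun a b => (a.1 + b.1, a.2 + b.2 + ((d * ((a.1.val + b.1.val) / n) : ℕ) : ZMod n))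
    let q : ZMod n × ZMod n → AddCircle (1 : ℚ) :=
      fun a => (((a.1.val * a.2.val : ℚ) / n + ((a.1.val : ℚ) ^ 2 * t) / n ^ 2 : ℚ) :
        AddCircle (1 : ℚ))
    let b : ZMod n × ZMod n → ZMod n × ZMod n → AddCircle (1 : ℚ) :=
      fun x y => q (mul x y) - q x - q y
    (∀ x y : ZMod n × ZMod n,
      b x y = ((((x.1.val : ℚ) * y.2.val + (y.1.val : ℚ) * x.2.val) / n
          + (2 * (x.1.val : ℚ) * y.1.val * t) / n ^ 2 : ℚ) : AddCircle (1 : ℚ))) ∧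
    (∀ x y, b x y = b y x) ∧
    (∀ x y z, b (mul x y) z = b x z + b y z) ∧
    (∀ (m : ℕ) (x : ZMod n × ZMod n),
      q ((mul x)^[m] ((0, 0) : ZMod n × ZMod n)) = (m ^ 2 : ℤ) • q x) ∧
    (∀ x y : ZMod n × ZMod n, mul x y = (0, 0) → q y = q x) := by
  haveI : NeZero n := ⟨hn.ne'⟩
  intro mul q b
  have hn' : (n : ℚ) ≠ 0 := by exact_mod_cast hn.ne'
  obtain ⟨m', hm'⟩ : (n : ℤ) ∣ (d : ℤ) - 2 * (t : ℤ) := by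
    rw [← ZMod.intCast_zmod_eq_zero_iff_dvd]
    push_cast
    rw [hdt]; ring
  have hdq : (d : ℚ) = 2 * (t : ℚ) + (n : ℚ) * (m' : ℚ) := by
    have := congrArg (Int.cast : ℤ → ℚ) hm'
    push_cast at this
    linarith
  have hcoe : ∀ (r s : ℚ) (z : ℤ), r - s = (z : ℚ) →
      ((r : AddCircle (1 : ℚ)) = (s : AddCircle (1 : ℚ))) := by
    intro r s z h
    have h2 : ((r - s : ℚ) : AddCircle (1 : ℚ)) = 0 := by
      rw [AddCircle.coe_eq_zero_iff]; exact ⟨z, by simp [h]⟩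
    rwa [AddCircle.coe_sub, sub_eq_zero] at h2
  have hzsmul : ∀ (z : ℤ) (r : ℚ),
      z • ((r : ℚ) : AddCircle (1 : ℚ)) = ((z • r : ℚ) : AddCircle (1 : ℚ)) := by
    intro z r; simp
  -- value of the first coordinate of a product
  have hq1 : ∀ x y : ZMod n × ZMod n, ((mul x y).1.val : ℚ) =
      (x.1.val : ℚ) + (y.1.val : ℚ) - n * (((x.1.val + y.1.val) / n : ℕ) : ℚ) := by
    intro x y
    have h1 : (mul x y).1.val = (x.1.val + y.1.val) % n := ZMod.val_add _ _
    have h2 := Nat.mod_add_div (x.1.val + y.1.val) n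
    have h3 := congrArg (Nat.cast : ℕ → ℚ) h2
    push_cast at h3
    rw [h1]
    push_cast
    linarith
  -- value of the second coordinate of a product
  have hq2 : ∀ x y : ZMod n × ZMod n, ((mul x y).2.val : ℚ) =
      (x.2.val : ℚ) + (y.2.val : ℚ) + d * (((x.1.val + y.1.val) / n : ℕ) : ℚ)
        - n * (((x.2.val + y.2.val + d * ((x.1.val + y.1.val) / n)) / n : ℕ) : ℚ) := by
    intro x y
    have he : (mul x y).2 =
        ((x.2.val + y.2.val + d * ((x.1.val + y.1.val) / n) : ℕ) : ZMod n) := by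
      show x.2 + y.2 + _ = _
      push_cast
      simp [ZMod.natCast_val, ZMod.cast_id]
    have h1 : (mul x y).2.val = (x.2.val + y.2.val + d * ((x.1.val + y.1.val) / n)) % n := by
      rw [he, ZMod.val_natCast]
    have h2 := Nat.mod_add_div (x.2.val + y.2.val + d * ((x.1.val + y.1.val) / n)) n
    have h3 := congrArg (Nat.cast : ℕ → ℚ) h2
    push_cast at h3
    rw [h1]
    push_cast
    linarith
  -- the polarization formula
  have hb : ∀ x y : ZMod n × ZMod n,
      b x y = ((((x.1.val : ℚ) * y.2.val + (y.1.val : ℚ) * x.2.val) / n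
          + (2 * (x.1.val : ℚ) * y.1.val * t) / n ^ 2 : ℚ) : AddCircle (1 : ℚ)) := by
    intro x y
    show q (mul x y) - q x - q y = _
    simp only [q]
    rw [← AddCircle.coe_sub, ← AddCircle.coe_sub]
    rw [hq1 x y, hq2 x y]
    set i := x.1.val with hi
    set k := x.2.val with hk
    set j := y.1.val with hj
    set l := y.2.val with hl
    set e := (i + j) / n with he
    set f := (k + l + d * e) / n with hf
    apply hcoe _ _
      (((i : ℤ) + j) * e * m' - (e : ℤ) * ((k : ℤ) + l + d * e)
        - (f : ℤ) * ((i : ℤ) + j) + (n : ℤ) * e * f + (e : ℤ) ^ 2 * t)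
    push_cast
    rw [hdq]
    field_simp
    ring
  -- symmetry
  have hsym : ∀ x y, b x y = b y x := by
    intro x y
    rw [hb x y, hb y x]
    exact congrArg _ (by ring)
  -- biadditivity in the first argument
  have hadd : ∀ x y z, b (mul x y) z = b x z + b y z := by
    intro x y z
    rw [hb (mul x y) z, hb x z, hb y z, ← AddCircle.coe_add]
    rw [hq1 x y, hq2 x y]
    set i := x.1.val with hi
    set k := x.2.val with hk
    set j := y.1.val with hj
    set l := y.2.val with hl
    set J := z.1.val with hJ
    set L := z.2.val with hL
    set e := (i + j) / n with he
    set f := (k + l + d * e) / n with hf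
    apply hcoe _ _ (-((e : ℤ) * L) - (J : ℤ) * f + (J : ℤ) * e * m')
    push_cast
    rw [hdq]
    field_simp
    ring
  -- auxiliary facts
  have hqmul : ∀ x y, q (mul x y) = q x + q y + b x y := by
    intro x y
    show q (mul x y) = q x + q y + (q (mul x y) - q x - q y)
    abel
  have hadd2 : ∀ x y z, b x (mul y z) = b x y + b x z := by
    intro x y z
    rw [hsym x (mul y z), hadd y z x, hsym y x, hsym z x]
  have hmul0 : ∀ x, mul x (0, 0) = x := by
    intro x
    have hE : (x.1.val + ((0, 0) : ZMod n × ZMod n).2.val) / n = 0 :=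
      Nat.div_eq_of_lt (by simpa using ZMod.val_lt x.1)
    show (x.1 + 0, x.2 + 0 + ((d * ((x.1.val + (0 : ZMod n).val) / n) : ℕ) : ZMod n)) = x
    have hE' : (x.1.val + (0 : ZMod n).val) / n = 0 :=
      Nat.div_eq_of_lt (by simpa using ZMod.val_lt x.1)
    rw [hE']
    simp
  have hq0 : q ((0, 0) : ZMod n × ZMod n) = 0 := by
    show (((((0 : ZMod n)).val * ((0 : ZMod n)).val : ℚ) / n
      + (((0 : ZMod n).val : ℚ) ^ 2 * t) / n ^ 2 : ℚ) : AddCircle (1 : ℚ)) = 0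
    simp [ZMod.val_zero]
  have hb0 : ∀ x, b x ((0, 0) : ZMod n × ZMod n) = 0 := by
    intro x
    show q (mul x (0, 0)) - q x - q (0, 0) = 0
    rw [hmul0, hq0]
    abel
  have hbxx : ∀ x, b x x = (2 : ℤ) • q x := by
    intro x
    rw [hb x x]
    show _ = (2 : ℤ) • ((((x.1.val * x.2.val : ℚ) / n
      + ((x.1.val : ℚ) ^ 2 * t) / n ^ 2 : ℚ)) : AddCircle (1 : ℚ))
    rw [hzsmul]
    exact congrArg _ (by rw [zsmul_eq_mul]; push_cast; ring)
  refine ⟨hb, hsym, hadd, ?_, ?_⟩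
  · -- powers
    intro m x
    have hbpow : ∀ m : ℕ, b x ((mul x)^[m] ((0, 0) : ZMod n × ZMod n)) = (m : ℤ) • b x x := by
      intro m
      induction m with
      | zero => simpa using hb0 x
      | succ m ih =>
        rw [Function.iterate_succ_apply', hadd2, ih]
        have : ((m + 1 : ℕ) : ℤ) = (m : ℤ) + 1 := by push_cast; ring
        rw [this, add_smul, one_smul]
        abel
    induction m with
    | zero => simpa using hq0
    | succ m ih =>
      rw [Function.iterate_succ_apply', hqmul, ih, hbpow, hbxx, smul_smul]
      have hc : (((m + 1 : ℕ) : ℤ) ^ 2) = (m : ℤ) ^ 2 + (m : ℤ) * 2 + 1 := by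
        push_cast; ring
      rw [hc, add_smul, add_smul, one_smul]
      abel
  · -- inverses
    intro x y hxy
    have h5 : q x + q y + b x y = 0 := by rw [← hqmul, hxy, hq0]
    have h6 : b x x + b x y = 0 := by rw [← hadd2 x x y, hxy, hb0]
    have h8 : b x y = -(b x x) := eq_neg_of_add_eq_zero_right h6
    rw [h8, hbxx, two_smul] at h5
    have h10 : q y - q x = 0 := by rw [← h5]; abel
    exact sub_eq_zero.mp h10
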